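/- A Motzkin tree is uniquely closable (i.e., there exists exactly one closed lambda term in de Bruijn form having it as its skeleton) if and only if on every path from the root to a leaf there occurs exactly one unary node l. -/

import Mathlib

/-- Motzkin trees (binary-unary trees): leaf `v`, unary `l`, binary `a`. -/
inductive Mot : Type
  | v : Mot
  | l : Mot → Mot
  | a : Mot → Mot → Mot
deriving DecidableEq

/-- Lambda terms in de Bruijn form. -/
inductive Lam : Type
  | v : Nat → Lam
  | l : Lam → Lam
  | a : Lam → Lam → Lam
deriving DecidableEq

/-- `t` is closed at depth `d`. -/
def Lam.closedAt : Lam → Nat → Prop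
  | .v i, d => i < d
  | .l t, d => t.closedAt (d + 1)
  | .a s t, d => s.closedAt d ∧ t.closedAt d

/-- The Motzkin-tree skeleton of a de Bruijn term. -/
def Lam.skel : Lam → Mot
  | .v _ => .v
  | .l t => .l t.skel
  | .a s t => .a s.skel t.skel

/-- For each leaf (in left-to-right order), the number of unary `l` nodes on the
path from the root to that leaf, starting from `d` accumulated binders. -/
def Mot.leafDepths : Mot → Nat → List Nat
  | .v, d => [d]
  | .l t, d => t.leafDepths (d + 1)
  | .a s t, d => s.leafDepths d ++ t.leafDepths d

/-!
Index every leaf of a skeleton `X` by a function `f` of the number `k` of binders above it: this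
gives a term `X.label f` that is closed iff `f k < k` at every leaf. A closed term forces `k ≥ 1`
at every leaf, so both `f = 0` and `f k = k - 1` yield closed terms, and they coincide iff every
`k` is `1`. Conversely, when every `k` is `1`, the only admissible index at each leaf is `0`.
-/

namespace Mot

def label (f : ℕ → ℕ) : Mot → ℕ → Lam
  | .v, d => .v (f d)
  | .l t, d => .l (t.label f (d + 1))
  | .a s t, d => .a (s.label f d) (t.label f d)

variable (f g : ℕ → ℕ)

@[simp]
theorem skel_label (X : Mot) (d : ℕ) : (X.label f d).skel = X := by
  induction X generalizing d <;> simp [label, Lam.skel, *]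

theorem closedAt_label_iff (X : Mot) (d : ℕ) :
    (X.label f d).closedAt d ↔ ∀ k ∈ X.leafDepths d, f k < k := by
  induction X generalizing d <;> simp [label, leafDepths, Lam.closedAt, or_imp, forall_and, *]

theorem label_eq_label_iff (X : Mot) (d : ℕ) :
    X.label f d = X.label g d ↔ ∀ k ∈ X.leafDepths d, f k = g k := by
  induction X generalizing d <;> simp [label, leafDepths, or_imp, forall_and, *]

end Mot

namespace Lam

theorem pos_of_mem_leafDepths_skel (t : Lam) (d : ℕ) (ht : t.closedAt d) :
    ∀ k ∈ t.skel.leafDepths d, 0 < k := by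
  induction t generalizing d with
  | v i => simpa [skel, Mot.leafDepths] using Nat.zero_lt_of_lt ht
  | l s ih => exact ih (d + 1) ht
  | a s u ihs ihu =>
    simpa [skel, Mot.leafDepths, or_imp, forall_and] using ⟨ihs d ht.1, ihu d ht.2⟩

theorem eq_label_zero_of_closedAt (t : Lam) (d : ℕ) (ht : t.closedAt d)
    (hle : ∀ k ∈ t.skel.leafDepths d, k ≤ 1) : t = t.skel.label 0 d := by
  induction t generalizing d with
  | v i =>
    simp only [closedAt, skel, Mot.leafDepths, Mot.label, List.mem_singleton, forall_eq,
      Pi.zero_apply, v.injEq] at *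
    omega
  | l s ih => simpa [skel, Mot.label] using ih (d + 1) ht hle
  | a s u ihs ihu =>
    simp only [skel, Mot.leafDepths, List.mem_append, or_imp, forall_and] at hle
    simp only [skel, Mot.label, ← ihs d ht.1 hle.1, ← ihu d ht.2 hle.2]

end Lam

/-- A Motzkin tree is uniquely closable iff every root-to-leaf path contains
exactly one unary node `l`. -/
theorem stmt3 (X : Mot) :
    (∃! t : Lam, t.closedAt 0 ∧ t.skel = X) ↔ ∀ d ∈ X.leafDepths 0, d = 1 := by
  constructor
  · rintro ⟨t, ⟨ht, rfl⟩, huniq⟩ k hk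
    have hpos := t.pos_of_mem_leafDepths_skel 0 ht
    have hclosed (f : ℕ → ℕ) (hf : ∀ k, 0 < k → f k < k) :
        (t.skel.label f 0).closedAt 0 ∧ (t.skel.label f 0).skel = t.skel :=
      ⟨(Mot.closedAt_label_iff f _ 0).2 fun k hk => hf k (hpos k hk), Mot.skel_label f _ 0⟩
    have hzero_eq_pred : t.skel.label 0 0 = t.skel.label (· - 1) 0 :=
      (huniq _ (hclosed 0 fun _ hk => hk)).trans (huniq _ (hclosed _ fun _ hk => by omega)).symm
    have hk_pred : 0 = k - 1 := (Mot.label_eq_label_iff 0 _ _ 0).1 hzero_eq_pred k hk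
    have := hpos k hk
    omega
  · intro h
    refine ⟨X.label 0 0, ⟨(Mot.closedAt_label_iff 0 X 0).2 fun k hk => by simp [h k hk],
      Mot.skel_label 0 X 0⟩, ?_⟩
    rintro t ⟨ht, rfl⟩
    exact t.eq_label_zero_of_closedAt 0 ht fun k hk => (h k hk).le
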